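/- arXiv:1303.3157 — 2 statements merged into one kernel-verified Lean document; each statement's English description precedes it below -/
import Mathlib

section
/- Let G be a group, M a commutative monoid, φ a filter on G, and s, t ∈ M with s ≠ 0 and t ≠ 0. Then: (a) if x, x' ∈ φ_s with x⁻¹x' ∈ φ_s⁺ and y, y' ∈ φ_t with y⁻¹y' ∈ φ_t⁺, then [x,y]⁻¹[x',y'] ∈ φ_{s+t}⁺; (b) for all x, x' ∈ φ_s and y ∈ φ_t, [xx', y]⁻¹ · ([x,y][x',y]) ∈ φ_{s+t}⁺, and for all x ∈ φ_s and y, y' ∈ φ_t, [x, yy']⁻¹ · ([x,y][x,y']) ∈ φ_{s+t}⁺. In particular, the commutator induces a well-defined biadditive map from (φ_s/φ_s⁺) × (φ_t/φ_t⁺) to φ_{s+t}/φ_{s+t}⁺. -/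
/-!
Every `φ u` is normal, since `[φ u, G] = [φ u, φ 0] ≤ φ u`; hence so is `φ_s⁺`. Checking
commutators modulo the normal subgroup `φ_{s+t}⁺` one generator `φ (s + u)` at a time gives
`[φ_s⁺, φ_t] ≤ φ_{s+t}⁺`, and likewise `[φ u, φ v] ≤ φ_v⁺` for `u ≠ 0`. Each claim then follows
from a commutator identity writing the element as a product of conjugates of such commutators.
-/

/-- `φ_s⁺`, the subgroup generated by all `φ (s + t)` with `t ≠ 0`. -/
def filterPlus {M : Type*} [AddCommMonoid M] {G : Type*} [Group G]
    (φ : M → Subgroup G) (s : M) : Subgroup G :=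
  ⨆ t ∈ {t : M | t ≠ 0}, φ (s + t)

/-- A filter on `G` over the commutative monoid `M`. -/
def IsFilter {M : Type*} [AddCommMonoid M] {G : Type*} [Group G]
    (φ : M → Subgroup G) : Prop :=
  φ 0 = ⊤ ∧ ∀ s t : M, ⁅φ s, φ t⁆ ≤ φ (s + t) ∧ φ (s + t) ≤ φ s ⊓ φ t

/-- The commutator `[x,y] = x⁻¹y⁻¹xy` (the convention used in the paper). -/
def pcomm {G : Type*} [Group G] (x y : G) : G := x⁻¹ * y⁻¹ * x * y

section pcomm

variable {G : Type*} [Group G]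

open scoped commutatorElement in
lemma pcomm_eq_commutatorElement (x y : G) : pcomm x y = ⁅x⁻¹, y⁻¹⁆ := by
  simp only [pcomm, commutatorElement_def, inv_inv]

lemma pcomm_mem_commutator {H K : Subgroup G} {x y : G} (hx : x ∈ H) (hy : y ∈ K) :
    pcomm x y ∈ ⁅H, K⁆ := by
  rw [pcomm_eq_commutatorElement]
  exact Subgroup.commutator_mem_commutator (inv_mem hx) (inv_mem hy)

lemma inv_pcomm_mul_pcomm_mul_left (x a y : G) :
    (pcomm x y)⁻¹ * pcomm (x * a) y = pcomm (pcomm x y) a * pcomm a y := by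
  simp only [pcomm]; group

lemma inv_pcomm_mul_pcomm_mul_right (x y b : G) :
    (pcomm x y)⁻¹ * pcomm x (y * b) =
      (pcomm x y)⁻¹ * pcomm x b * pcomm x y * pcomm (pcomm x y) b := by
  simp only [pcomm]; group

lemma inv_pcomm_mul_left_mul_pcomm_mul_pcomm (x x' y : G) :
    (pcomm (x * x') y)⁻¹ * (pcomm x y * pcomm x' y) =
      (pcomm x' y)⁻¹ * pcomm x' (pcomm x y) * pcomm x' y := by
  simp only [pcomm]; group

lemma inv_pcomm_mul_right_mul_pcomm_mul_pcomm (x y y' : G) :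
    (pcomm x (y * y'))⁻¹ * (pcomm x y * pcomm x y') =
      pcomm y' (pcomm x y) * pcomm (pcomm x y) (pcomm x y') := by
  simp only [pcomm]; group

end pcomm

/-- In `G ⧸ N` the hypothesis says that each image of `H i` centralizes the image of `K`. -/
lemma Subgroup.commutator_iSup_le {G : Type*} [Group G] {ι : Sort*} {H : ι → Subgroup G}
    {K N : Subgroup G} [N.Normal] (h : ∀ i, ⁅H i, K⁆ ≤ N) : ⁅⨆ i, H i, K⁆ ≤ N := by
  simp only [← QuotientGroup.ker_mk' N, ← Subgroup.map_eq_bot_iff, Subgroup.map_commutator,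
    Subgroup.commutator_eq_bot_iff_le_centralizer, Subgroup.map_iSup, iSup_le_iff] at h ⊢
  exact h

section filterPlus

variable {M : Type*} [AddCommMonoid M] {G : Type*} [Group G] {φ : M → Subgroup G}

lemma le_filterPlus (φ : M → Subgroup G) {s u : M} (hu : u ≠ 0) :
    φ (s + u) ≤ filterPlus φ s :=
  le_iSup₂ (f := fun t (_ : t ∈ {t : M | t ≠ 0}) => φ (s + t)) u hu

namespace IsFilter

lemma commutator_le (hφ : IsFilter φ) (s t : M) : ⁅φ s, φ t⁆ ≤ φ (s + t) :=
  (hφ.2 s t).1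

lemma normal (hφ : IsFilter φ) (s : M) : (φ s).Normal := by
  rw [← Subgroup.commutator_top_right_le_iff, ← hφ.1]
  simpa using hφ.commutator_le s 0

lemma filterPlus_normal (hφ : IsFilter φ) (s : M) : (filterPlus φ s).Normal :=
  Subgroup.biSup_normal _ _ fun u _ => hφ.normal (s + u)

lemma pcomm_mem_right (hφ : IsFilter φ) {t : M} (x : G) {y : G} (hy : y ∈ φ t) :
    pcomm x y ∈ φ t :=
  have := hφ.normal t
  Subgroup.commutator_le_right ⊤ (φ t) (pcomm_mem_commutator (Subgroup.mem_top x) hy)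

lemma pcomm_mem_left (hφ : IsFilter φ) {s : M} {x : G} (hx : x ∈ φ s) (y : G) :
    pcomm x y ∈ φ s :=
  have := hφ.normal s
  Subgroup.commutator_le_left (φ s) ⊤ (pcomm_mem_commutator hx (Subgroup.mem_top y))

lemma pcomm_mem (hφ : IsFilter φ) {s t : M} {x y : G} (hx : x ∈ φ s) (hy : y ∈ φ t) :
    pcomm x y ∈ φ (s + t) :=
  hφ.commutator_le s t (pcomm_mem_commutator hx hy)

lemma commutator_filterPlus_left_le (hφ : IsFilter φ) (s t : M) :
    ⁅filterPlus φ s, φ t⁆ ≤ filterPlus φ (s + t) := by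
  have := hφ.filterPlus_normal (s + t)
  refine Subgroup.commutator_iSup_le fun u => Subgroup.commutator_iSup_le fun hu => ?_
  calc ⁅φ (s + u), φ t⁆ ≤ φ (s + t + u) := add_right_comm s u t ▸ hφ.commutator_le _ _
    _ ≤ filterPlus φ (s + t) := le_filterPlus φ hu

lemma commutator_filterPlus_right_le (hφ : IsFilter φ) (s t : M) :
    ⁅φ s, filterPlus φ t⁆ ≤ filterPlus φ (s + t) := by
  rw [Subgroup.commutator_comm, add_comm]
  exact hφ.commutator_filterPlus_left_le t s

lemma pcomm_mem_filterPlus (hφ : IsFilter φ) {u v : M} (hu : u ≠ 0) {z c : G}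
    (hz : z ∈ φ u) (hc : c ∈ φ v) : pcomm z c ∈ filterPlus φ v := by
  have hz₀ : z ∈ filterPlus φ 0 := le_filterPlus φ hu (by rwa [zero_add])
  simpa using hφ.commutator_filterPlus_left_le 0 v (pcomm_mem_commutator hz₀ hc)

lemma inv_pcomm_mul_pcomm_mul_left_mem (hφ : IsFilter φ) {s t : M} (x : G) {a y : G}
    (ha : a ∈ filterPlus φ s) (hy : y ∈ φ t) :
    (pcomm x y)⁻¹ * pcomm (x * a) y ∈ filterPlus φ (s + t) := by
  rw [inv_pcomm_mul_pcomm_mul_left]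
  refine mul_mem ?_ (hφ.commutator_filterPlus_left_le s t (pcomm_mem_commutator ha hy))
  rw [add_comm]
  exact hφ.commutator_filterPlus_right_le t s (pcomm_mem_commutator (hφ.pcomm_mem_right x hy) ha)

lemma inv_pcomm_mul_pcomm_mul_right_mem (hφ : IsFilter φ) {s t : M} {x : G} (hx : x ∈ φ s)
    (y : G) {b : G} (hb : b ∈ filterPlus φ t) :
    (pcomm x y)⁻¹ * pcomm x (y * b) ∈ filterPlus φ (s + t) := by
  rw [inv_pcomm_mul_pcomm_mul_right]
  refine mul_mem ((hφ.filterPlus_normal (s + t)).conj_mem' _ ?_ _)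
    (hφ.commutator_filterPlus_right_le s t (pcomm_mem_commutator (hφ.pcomm_mem_left hx y) hb))
  exact hφ.commutator_filterPlus_right_le s t (pcomm_mem_commutator hx hb)

lemma inv_pcomm_mul_left_mul_pcomm_mul_pcomm_mem (hφ : IsFilter φ) {s t : M} (hs : s ≠ 0)
    {x x' y : G} (hx : x ∈ φ s) (hx' : x' ∈ φ s) (hy : y ∈ φ t) :
    (pcomm (x * x') y)⁻¹ * (pcomm x y * pcomm x' y) ∈ filterPlus φ (s + t) := by
  rw [inv_pcomm_mul_left_mul_pcomm_mul_pcomm]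
  exact (hφ.filterPlus_normal (s + t)).conj_mem' _
    (hφ.pcomm_mem_filterPlus hs hx' (hφ.pcomm_mem hx hy)) _

lemma inv_pcomm_mul_right_mul_pcomm_mul_pcomm_mem (hφ : IsFilter φ) {s t : M} (ht : t ≠ 0)
    {x y y' : G} (hx : x ∈ φ s) (hy : y ∈ φ t) (hy' : y' ∈ φ t) :
    (pcomm x (y * y'))⁻¹ * (pcomm x y * pcomm x y') ∈ filterPlus φ (s + t) := by
  rw [inv_pcomm_mul_right_mul_pcomm_mul_pcomm]
  exact mul_mem (hφ.pcomm_mem_filterPlus ht hy' (hφ.pcomm_mem hx hy))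
    (hφ.pcomm_mem_filterPlus ht (hφ.pcomm_mem_right x hy) (hφ.pcomm_mem hx hy'))

end IsFilter

end filterPlus

/-- (a) well-definedness and (b) biadditivity of the commutator map
`φ_s/φ_s⁺ × φ_t/φ_t⁺ → φ_{s+t}/φ_{s+t}⁺`. -/
theorem statement2 {G : Type*} [Group G] {M : Type*} [AddCommMonoid M]
    (φ : M → Subgroup G) (hφ : IsFilter φ) (s t : M) (hs : s ≠ 0) (ht : t ≠ 0) :
    (∀ x x' y y' : G, x ∈ φ s → x' ∈ φ s → x⁻¹ * x' ∈ filterPlus φ s →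
        y ∈ φ t → y' ∈ φ t → y⁻¹ * y' ∈ filterPlus φ t →
        (pcomm x y)⁻¹ * pcomm x' y' ∈ filterPlus φ (s + t)) ∧
    (∀ x x' y : G, x ∈ φ s → x' ∈ φ s → y ∈ φ t →
        (pcomm (x * x') y)⁻¹ * (pcomm x y * pcomm x' y) ∈ filterPlus φ (s + t)) ∧
    (∀ x y y' : G, x ∈ φ s → y ∈ φ t → y' ∈ φ t →
        (pcomm x (y * y'))⁻¹ * (pcomm x y * pcomm x y') ∈ filterPlus φ (s + t)) := by
  refine ⟨fun x x' y y' _ hx' hxx' hy _ hyy' => ?_,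
    fun _ _ _ => hφ.inv_pcomm_mul_left_mul_pcomm_mul_pcomm_mem hs,
    fun _ _ _ => hφ.inv_pcomm_mul_right_mul_pcomm_mul_pcomm_mem ht⟩
  have h₁ := hφ.inv_pcomm_mul_pcomm_mul_left_mem x hxx' hy
  have h₂ := hφ.inv_pcomm_mul_pcomm_mul_right_mem hx' y hyy'
  rw [mul_inv_cancel_left] at h₁ h₂
  simpa only [mul_assoc, mul_inv_cancel_left] using mul_mem h₁ h₂
end

section
/- Let M be a commutative monoid with a preorder ≼ (reflexive and transitive) that is compatible with addition (s ≼ t and u ≼ v imply s + u ≼ t + v), in which 0 is a minimal element (0 ≼ s for all s), and which satisfies property (★). Let X be a generating set of M such that whenever x ∈ X and y ∈ M with y ≼ x, also y ∈ X. Let G be a group and π a function from X to the normal subgroups of G such that for all s, u ∈ X, s ≼ u implies π_u ≤ π_s. Define π̄_s to be the join over all d ≥ 1 and all sequences (s₁, …, s_d) of elements of X with s₁ + ⋯ + s_d = s of the left-normed iterated commutators [π_{s₁}, …, π_{s_d}]. Then π̄ is order-reversing (s ≼ u implies π̄_u ≤ π̄_s) and for all s, t ∈ M, [π̄_s, π̄_t]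 ≤ π̄_{s+t} ≤ π̄_s ∩ π̄_t. -/
/-- Property (★) for a relation `r` on a commutative monoid `M`. -/
def StarProp {M : Type*} [AddCommMonoid M] (r : M → M → Prop) : Prop :=
  ∀ d : ℕ, 1 ≤ d → ∀ (s : M) (u : Fin d → M),
    r s (∑ i, u i) → ∃ f : Fin d → M, (∀ i, r (f i) (u i)) ∧ s = ∑ i, f i

/-- The left-normed iterated commutator `[A₁, …, A_k]` of a list of subgroups
(`⊤` by convention on the empty list). -/
def iteratedCommutator {G : Type*} [Group G] : List (Subgroup G) → Subgroup G
  | [] => ⊤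
  | A :: l => l.foldl (fun H K => ⁅H, K⁆) A

/-- `π̄_s`: the join of the iterated commutators `[π_{s₁}, …, π_{s_d}]` over all nonempty
sequences `(s₁, …, s_d)` of elements of `X` with `s₁ + ⋯ + s_d = s`. -/
def genFilter {G : Type*} [Group G] {M : Type*} [AddCommMonoid M]
    (X : Set M) (π : M → Subgroup G) (s : M) : Subgroup G :=
  ⨆ l ∈ {l : List M | l ≠ [] ∧ (∀ x ∈ l, x ∈ X) ∧ l.sum = s},
    iteratedCommutator (l.map π)

/-!
Antitonicity of `π̄`: given `s ≼ u` and a decomposition `u = u₁ + ⋯ + u_d` over `X`, property (★)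
splits `s = s₁ + ⋯ + s_d` with `s_i ≼ u_i`; the `s_i` lie in `X` by downward closure and
`π_{u_i} ≤ π_{s_i}`, so each generator `[π_{u₁}, …, π_{u_d}]` of `π̄_u` lies in one of `π̄_s`.
Since `0` is minimal, `s ≼ s + t` and `t ≼ s + t`, which gives `π̄_{s+t} ≤ π̄_s ⊓ π̄_t`.

For `[π̄_s, π̄_t] ≤ π̄_{s+t}` it suffices to bound `[π̄_a, [π_{t₁}, …, π_{t_e}]]` by
`π̄_{a + t₁ + ⋯ + t_e}`. Appending one factor gives `[π̄_a, π_x] ≤ π̄_{a+x}` for `x ∈ X`, and the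
three subgroups lemma (all `π̄_b` are normal) reduces the length `e + 1` case to two instances of
the length `e` case and two instances of this one-factor step.
-/

namespace Subgroup

variable {G : Type*} [Group G]

theorem commutator_le_iff_map_le_centralizer {H K T : Subgroup G} [T.Normal] :
    ⁅H, K⁆ ≤ T ↔ H.map (QuotientGroup.mk' T) ≤ centralizer (K.map (QuotientGroup.mk' T)) := by
  rw [← commutator_eq_bot_iff_le_centralizer, ← map_commutator, map_eq_bot_iff,
    QuotientGroup.ker_mk']

theorem iSup_commutator_le_iff {ι : Sort*} {H : ι → Subgroup G} {K T : Subgroup G} [T.Normal] :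
    ⁅⨆ i, H i, K⁆ ≤ T ↔ ∀ i, ⁅H i, K⁆ ≤ T := by
  simp only [commutator_le_iff_map_le_centralizer, map_iSup, iSup_le_iff]

theorem commutator_commutator_le_of_rotate {H₁ H₂ H₃ T : Subgroup G} [T.Normal]
    (h₁ : ⁅⁅H₂, H₃⁆, H₁⁆ ≤ T) (h₂ : ⁅⁅H₃, H₁⁆, H₂⁆ ≤ T) : ⁅⁅H₁, H₂⁆, H₃⁆ ≤ T := by
  simp only [← QuotientGroup.ker_mk' T, ← map_eq_bot_iff, map_commutator] at h₁ h₂ ⊢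
  exact commutator_commutator_eq_bot_of_rotate h₁ h₂

end Subgroup

theorem List.Forall₂.imp_of_mem {α β : Type*} {R S : α → β → Prop} {l₁ : List α} {l₂ : List β}
    (h : Forall₂ R l₁ l₂) (H : ∀ a ∈ l₁, ∀ b ∈ l₂, R a b → S a b) : Forall₂ S l₁ l₂ := by
  induction h with
  | nil => exact .nil
  | cons hab _ ih =>
    refine .cons (H _ mem_cons_self _ mem_cons_self hab) (ih fun a ha b hb => ?_)
    exact H a (mem_cons_of_mem _ ha) b (mem_cons_of_mem _ hb)

theorem StarProp.exists_forall₂_sum_eq {M : Type*} [AddCommMonoid M] {r : M → M → Prop}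
    (hstar : StarProp r) {s : M} {l : List M} (hl : l ≠ []) (h : r s l.sum) :
    ∃ l' : List M, List.Forall₂ r l' l ∧ l'.sum = s := by
  rw [← Fin.sum_univ_getElem] at h
  obtain ⟨f, hf, rfl⟩ := hstar l.length (List.length_pos_iff.mpr hl) s (fun i => l[i]) h
  refine ⟨List.ofFn f, List.forall₂_iff_get.mpr ⟨by simp, fun i _ _ => ?_⟩, List.sum_ofFn⟩
  simpa using hf ⟨i, by simpa using ‹i < _›⟩

section IteratedCommutator

variable {G : Type*} [Group G]

theorem iteratedCommutator_mono {l₁ l₂ : List (Subgroup G)} (h : List.Forall₂ (· ≤ ·) l₁ l₂) :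
    iteratedCommutator l₁ ≤ iteratedCommutator l₂ := by
  cases h with
  | nil => exact le_rfl
  | cons hAB h =>
    exact List.rel_foldl (P := (· ≤ ·)) (R := (· ≤ ·))
      (fun _ _ hH _ _ hK => Subgroup.commutator_mono hH hK) hAB h

theorem normal_foldl_commutator {A : Subgroup G} [A.Normal] {l : List (Subgroup G)}
    (hl : ∀ B ∈ l, B.Normal) : (l.foldl (fun H K => ⁅H, K⁆) A).Normal := by
  induction l generalizing A with
  | nil => assumption
  | cons B l ih =>
    have := hl B List.mem_cons_self
    exact ih fun C hC => hl C (List.mem_cons_of_mem _ hC)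

theorem iteratedCommutator_normal {l : List (Subgroup G)} (hl : ∀ A ∈ l, A.Normal) :
    (iteratedCommutator l).Normal := by
  cases l with
  | nil => exact Subgroup.normal_top
  | cons A l =>
    have := hl A List.mem_cons_self
    exact normal_foldl_commutator fun B hB => hl B (List.mem_cons_of_mem _ hB)

theorem iteratedCommutator_append_singleton {l : List (Subgroup G)} (hl : l ≠ [])
    (A : Subgroup G) : iteratedCommutator (l ++ [A]) = ⁅iteratedCommutator l, A⁆ := by
  obtain ⟨B, l, rfl⟩ := List.exists_cons_of_ne_nil hl
  simp [iteratedCommutator, List.foldl_append]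

end IteratedCommutator

section GenFilter

variable {G : Type*} [Group G] {M : Type*} [AddCommMonoid M] {X : Set M} {π : M → Subgroup G}

theorem le_genFilter {l : List M} (hl : l ≠ []) (hlX : ∀ x ∈ l, x ∈ X) :
    iteratedCommutator (l.map π) ≤ genFilter X π l.sum :=
  le_biSup (fun l : List M => iteratedCommutator (l.map π)) ⟨hl, hlX, rfl⟩

theorem genFilter_normal (hπ : ∀ x ∈ X, (π x).Normal) (s : M) : (genFilter X π s).Normal :=
  Subgroup.biSup_normal _ _ fun _ ⟨_, hlX, _⟩ => iteratedCommutator_normal <| by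
    simpa using fun x hx => hπ x (hlX x hx)

theorem genFilter_commutator_le_iff {s : M} {K T : Subgroup G} [T.Normal] :
    ⁅genFilter X π s, K⁆ ≤ T ↔ ∀ l : List M, l ≠ [] → (∀ x ∈ l, x ∈ X) → l.sum = s →
      ⁅iteratedCommutator (l.map π), K⁆ ≤ T := by
  simp only [genFilter, Subgroup.iSup_commutator_le_iff, Set.mem_ofPred_eq, and_imp]

theorem genFilter_commutator_le_genFilter_add (hπ : ∀ x ∈ X, (π x).Normal) (a : M) {x : M}
    (hx : x ∈ X) : ⁅genFilter X π a, π x⁆ ≤ genFilter X π (a + x) := by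
  have := genFilter_normal hπ (a + x)
  rw [genFilter_commutator_le_iff]
  rintro l hl hlX rfl
  have hlx := le_genFilter (X := X) (π := π) (l := l ++ [x]) (by simp)
    (by simpa [or_imp, forall_and] using ⟨hlX, hx⟩)
  rwa [List.map_append, List.map_singleton, iteratedCommutator_append_singleton (by simpa using hl),
    List.sum_append, List.sum_singleton] at hlx

theorem commutator_iteratedCommutator_le {N : M → Subgroup G} (hN : ∀ a, (N a).Normal)
    (hstep : ∀ a, ∀ x ∈ X, ⁅N a, π x⁆ ≤ N (a + x)) {m : List M} (hm : m ≠ [])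
    (hmX : ∀ x ∈ m, x ∈ X) (a : M) : ⁅N a, iteratedCommutator (m.map π)⁆ ≤ N (a + m.sum) := by
  induction m using List.reverseRecOn generalizing a with
  | nil => exact absurd rfl hm
  | append_singleton m x ih =>
    have hx : x ∈ X := hmX x (by simp)
    rcases eq_or_ne m [] with rfl | hm'
    · simpa [iteratedCommutator] using hstep a x hx
    have hmX' : ∀ y ∈ m, y ∈ X := fun y hy => hmX y (by simp [hy])
    have := hN (a + (m ++ [x]).sum)
    set B := iteratedCommutator (m.map π)
    rw [List.map_append, List.map_singleton, iteratedCommutator_append_singleton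
      (by simpa using hm'), Subgroup.commutator_comm, List.sum_append, List.sum_singleton]
    apply Subgroup.commutator_commutator_le_of_rotate
    · calc ⁅⁅π x, N a⁆, B⁆ ≤ ⁅N (a + x), B⁆ :=
            Subgroup.commutator_mono (Subgroup.commutator_comm (N a) _ ▸ hstep a x hx) le_rfl
        _ ≤ N (a + x + m.sum) := ih hm' hmX' (a + x)
        _ = N (a + (m.sum + x)) := by rw [add_assoc, add_comm x]
    · calc ⁅⁅N a, B⁆, π x⁆ ≤ ⁅N (a + m.sum), π x⁆ := Subgroup.commutator_mono (ih hm' hmX' a) le_rfl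
        _ ≤ N (a + m.sum + x) := hstep _ x hx
        _ = N (a + (m.sum + x)) := by rw [add_assoc]

theorem commutator_genFilter_le {N : M → Subgroup G} (hN : ∀ a, (N a).Normal)
    (hstep : ∀ a, ∀ x ∈ X, ⁅N a, π x⁆ ≤ N (a + x)) (a t : M) :
    ⁅N a, genFilter X π t⁆ ≤ N (a + t) := by
  have := hN (a + t)
  rw [Subgroup.commutator_comm, genFilter_commutator_le_iff]
  rintro m hm hmX rfl
  rw [Subgroup.commutator_comm]
  exact commutator_iteratedCommutator_le hN hstep hm hmX a

theorem genFilter_le_of_rel {r : M → M → Prop} (hstar : StarProp r)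
    (hdown : ∀ x ∈ X, ∀ y, r y x → y ∈ X) (hmono : ∀ s ∈ X, ∀ u ∈ X, r s u → π u ≤ π s)
    {s u : M} (hsu : r s u) : genFilter X π u ≤ genFilter X π s := by
  refine iSup₂_le fun l ⟨hl, hlX, hsum⟩ => ?_
  obtain ⟨l', hl'l, rfl⟩ := hstar.exists_forall₂_sum_eq hl (hsum ▸ hsu)
  have hl' : List.Forall₂ (fun a b => a ∈ X ∧ π b ≤ π a) l' l :=
    hl'l.imp_of_mem fun a _ b hb hab =>
      have ha := hdown b (hlX b hb) a hab
      ⟨ha, hmono a ha b (hlX b hb) hab⟩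
  obtain ⟨hl'X, hle⟩ := (List.forall₂_and_left _ _).mp hl'
  have hl'ne : l' ≠ [] := by
    rintro rfl
    exact hl (List.forall₂_nil_left_iff.mp hl'l)
  refine le_trans (iteratedCommutator_mono ?_) (le_genFilter hl'ne hl'X)
  simpa using List.Forall₂.flip (R := fun b a => π b ≤ π a) hle

end GenFilter

theorem statement10_general {M : Type*} [AddCommMonoid M] (r : M → M → Prop)
    (hrefl : ∀ s, r s s)
    (hadd : ∀ a b c d : M, r a b → r c d → r (a + c) (b + d))
    (hzero : ∀ s : M, r 0 s) (hstar : StarProp r)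
    {G : Type*} [Group G] (X : Set M)
    (hdown : ∀ x ∈ X, ∀ y : M, r y x → y ∈ X)
    (π : M → Subgroup G) (hnorm : ∀ x ∈ X, (π x).Normal)
    (hmono : ∀ s ∈ X, ∀ u ∈ X, r s u → π u ≤ π s) :
    (∀ s u : M, r s u → genFilter X π u ≤ genFilter X π s) ∧
    (∀ s t : M, ⁅genFilter X π s, genFilter X π t⁆ ≤ genFilter X π (s + t) ∧
      genFilter X π (s + t) ≤ genFilter X π s ⊓ genFilter X π t) := by
  have anti : ∀ s u, r s u → genFilter X π u ≤ genFilter X π s :=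
    fun _ _ => genFilter_le_of_rel hstar hdown hmono
  refine ⟨anti, fun s t => ⟨?_, ?_⟩⟩
  · exact commutator_genFilter_le (genFilter_normal hnorm)
      (fun a _ hx => genFilter_commutator_le_genFilter_add hnorm a hx) s t
  · refine le_inf (anti _ _ ?_) (anti _ _ ?_)
    · simpa using hadd s s 0 t (hrefl s) (hzero t)
    · simpa using hadd 0 s t t (hzero s) (hrefl t)

/-- Theorem 3 of the paper: under the stated hypotheses `π̄` is an order-reversing
(pre-ordered) filter. -/
theorem statement10 {M : Type*} [AddCommMonoid M] (r : M → M → Prop)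
    (hrefl : ∀ s, r s s) (htrans : ∀ a b c : M, r a b → r b c → r a c)
    (hadd : ∀ a b c d : M, r a b → r c d → r (a + c) (b + d))
    (hzero : ∀ s : M, r 0 s) (hstar : StarProp r)
    {G : Type*} [Group G] (X : Set M) (hgen : AddSubmonoid.closure X = ⊤)
    (hdown : ∀ x ∈ X, ∀ y : M, r y x → y ∈ X)
    (π : M → Subgroup G) (hnorm : ∀ x ∈ X, (π x).Normal)
    (hmono : ∀ s ∈ X, ∀ u ∈ X, r s u → π u ≤ π s) :
    (∀ s u : M, r s u → genFilter X π u ≤ genFilter X π s) ∧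
    (∀ s t : M, ⁅genFilter X π s, genFilter X π t⁆ ≤ genFilter X π (s + t) ∧
      genFilter X π (s + t) ≤ genFilter X π s ⊓ genFilter X π t) :=
  statement10_general r hrefl hadd hzero hstar X hdown π hnorm hmono
end
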